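/- arXiv:2501.03010 — 2 statements merged into one kernel-verified Lean document; each statement's English description precedes it below -/
import Mathlib

section
/- The pushforward of the measure μ under the projection (l, r, t) ↦ (l, r) is the measure on (0,∞)² with density (l, r) ↦ (3^{1/8}/8) · (l + r)^{−5/2} with respect to Lebesgue measure. -/
/-!
Integrating out `t`: for fixed `a = l + r` the `t`-dependence `exp(-b/t) t^{-5/2}`, with
`b = a²/(2√3)`, is an inverse-gamma integrand, and `t = 1/y` turns its integral into
`Γ(3/2) b^{-3/2}`. The factor `b^{-3/2} ∝ a^{-3}` combines with `a^{1/2}` into `a^{-5/2}`.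
-/

open MeasureTheory

/-- The measure `μ` on `(0,∞)³` with density
`(l,r,t) ↦ (3^{−5/8}/(8√(2π))) (l+r)^{1/2} exp(−(l+r)²/(2√3 t)) t^{−5/2}`
with respect to Lebesgue measure. -/
noncomputable def μ : Measure (ℝ × ℝ × ℝ) :=
  (volume.restrict {p : ℝ × ℝ × ℝ | 0 < p.1 ∧ 0 < p.2.1 ∧ 0 < p.2.2}).withDensity
    fun p => ENNReal.ofReal
      ((3:ℝ) ^ (-(5:ℝ)/8) / (8 * Real.sqrt (2 * Real.pi)) * (p.1 + p.2.1) ^ ((1:ℝ)/2) *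
        Real.exp (-(p.1 + p.2.1)^2 / (2 * Real.sqrt 3 * p.2.2)) * p.2.2 ^ (-(5:ℝ)/2))

open Set Real
open scoped ENNReal

theorem map_withDensity_of_measurePreserving {α β : Type*} [MeasurableSpace α]
    [MeasurableSpace β] {μ : Measure α} {ν : Measure β} (e : α ≃ᵐ β)
    (he : MeasurePreserving e μ ν) (g : α → ℝ≥0∞) :
    Measure.map e (μ.withDensity g) = ν.withDensity (g ∘ e.symm) := by
  ext s hs
  rw [Measure.map_apply e.measurable hs, withDensity_apply _ (e.measurable hs),
    withDensity_apply _ hs, ← he.map_eq, Measure.restrict_map e.measurable hs,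
    lintegral_map_equiv]
  simp

theorem map_fst_withDensity_prod {α β : Type*} [MeasurableSpace α] [MeasurableSpace β]
    (μ : Measure α) (ν : Measure β) [SFinite μ] [SFinite ν] {g : α × β → ℝ≥0∞}
    (hg : Measurable g) :
    Measure.map Prod.fst ((μ.prod ν).withDensity g)
      = μ.withDensity (fun x => ∫⁻ y, g (x, y) ∂ν) := by
  ext s hs
  rw [Measure.map_apply measurable_fst hs, withDensity_apply _ (measurable_fst hs),
    withDensity_apply _ hs, ← Set.prod_univ, ← Measure.restrict_prod_eq_prod_univ,
    lintegral_prod _ hg.aemeasurable]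

theorem integral_exp_neg_div_mul_rpow_Ioi {b s : ℝ} (hb : 0 < b) (hs : 0 < s) :
    ∫ t in Ioi (0:ℝ), exp (-(b / t)) * t ^ (-s - 1) = (1 / b) ^ s * Gamma s := by
  rw [← integral_rpow_mul_exp_neg_mul_Ioi hs hb,
    ← integral_comp_rpow_Ioi (fun y => y ^ (s - 1) * exp (-(b * y))) (p := -1) (by norm_num)]
  refine setIntegral_congr_fun measurableSet_Ioi fun t (ht : 0 < t) => ?_
  simp only [rpow_neg_one, smul_eq_mul, abs_neg, abs_one, one_mul, inv_rpow ht.le,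
    ← rpow_neg ht.le, div_eq_mul_inv]
  rw [← mul_assoc, ← rpow_add ht, mul_comm]
  ring_nf

theorem integrableOn_exp_neg_div_mul_rpow_Ioi {b s : ℝ} (hb : 0 < b) (hs : 0 < s) :
    IntegrableOn (fun t => exp (-(b / t)) * t ^ (-s - 1)) (Ioi 0) :=
  Integrable.of_integral_ne_zero <| by
    rw [integral_exp_neg_div_mul_rpow_Ioi hb hs]
    have := Gamma_pos_of_pos hs
    positivity

theorem lintegral_exp_neg_div_mul_rpow_Ioi {b s : ℝ} (hb : 0 < b) (hs : 0 < s) :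
    ∫⁻ t in Ioi (0:ℝ), ENNReal.ofReal (exp (-(b / t)) * t ^ (-s - 1))
      = ENNReal.ofReal ((1 / b) ^ s * Gamma s) := by
  rw [← integral_exp_neg_div_mul_rpow_Ioi hb hs, ofReal_integral_eq_lintegral_ofReal
    (integrableOn_exp_neg_div_mul_rpow_Ioi hb hs)]
  filter_upwards [ae_restrict_mem measurableSet_Ioi] with t (ht : 0 < t)
  positivity

theorem Real.Gamma_three_halves : Gamma (3 / 2) = √π / 2 := by
  rw [show (3:ℝ) / 2 = 1 / 2 + 1 by norm_num, Gamma_add_one (by norm_num), Gamma_one_half_eq]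
  ring

theorem lintegral_Ioi_density_μ {a : ℝ} (ha : 0 < a) :
    ∫⁻ t in Ioi (0:ℝ), ENNReal.ofReal ((3:ℝ) ^ (-(5:ℝ)/8) / (8 * √(2 * π)) * a ^ ((1:ℝ)/2) *
        exp (-a ^ 2 / (2 * √3 * t)) * t ^ (-(5:ℝ)/2))
      = ENNReal.ofReal ((3:ℝ) ^ ((1:ℝ)/8) / 8 * a ^ (-(5:ℝ)/2)) := by
  set C := (3:ℝ) ^ (-(5:ℝ)/8) / (8 * √(2 * π)) * a ^ ((1:ℝ)/2) with hC_def
  set b := a ^ 2 / (2 * √3) with hb_def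
  have hb : 0 < b := by positivity
  have hC : 0 ≤ C := by positivity
  have hfactor : ∀ t : ℝ, C * exp (-a ^ 2 / (2 * √3 * t)) * t ^ (-(5:ℝ)/2)
      = C * (exp (-(b / t)) * t ^ (-(3/2 : ℝ) - 1)) := fun t => by
    rw [hb_def, div_div, neg_div, mul_assoc]; norm_num
  have hpow : (1 / b) ^ ((3:ℝ)/2) = 2 * √2 * (3:ℝ) ^ ((3:ℝ)/4) * a ^ (-(3:ℝ)) := by
    rw [one_div_div, div_rpow (by positivity) (by positivity),
      mul_rpow (by norm_num) (by positivity), sqrt_eq_rpow, sqrt_eq_rpow, ← rpow_mul (by norm_num),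
      ← rpow_natCast, ← rpow_mul ha.le, rpow_neg ha.le, show (3:ℝ)/2 = 1 + 1/2 by norm_num,
      rpow_add (by norm_num), rpow_one]
    norm_num
    ring
  have h3 : (3:ℝ) ^ (-(5:ℝ)/8) * (3:ℝ) ^ ((3:ℝ)/4) = (3:ℝ) ^ ((1:ℝ)/8) := by
    rw [← rpow_add (by norm_num)]; norm_num
  have ha5 : a ^ ((1:ℝ)/2) * a ^ (-(3:ℝ)) = a ^ (-(5:ℝ)/2) := by
    rw [← rpow_add ha]; norm_num
  simp_rw [hfactor, ENNReal.ofReal_mul hC]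
  rw [lintegral_const_mul' _ _ ENNReal.ofReal_ne_top,
    lintegral_exp_neg_div_mul_rpow_Ioi hb (by norm_num), ← ENNReal.ofReal_mul hC, hpow,
    Gamma_three_halves, hC_def, sqrt_mul (by norm_num), ← h3, ← ha5]
  congr 1
  field_simp

/-- The marginal of `μ` in the first two coordinates: the law of the start point
of a backward cone excursion for `θ = 2π/3`, with density `(3^{1/8}/8)(l+r)^{−5/2}`. -/
theorem stmt_7 :
    Measure.map (fun p : ℝ × ℝ × ℝ => (p.1, p.2.1)) μ
    = (volume.restrict {q : ℝ × ℝ | 0 < q.1 ∧ 0 < q.2}).withDensity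
        (fun q => ENNReal.ofReal ((3:ℝ) ^ ((1:ℝ)/8) / 8 * (q.1 + q.2) ^ (-(5:ℝ)/2))) := by
  set T := {q : ℝ × ℝ | 0 < q.1 ∧ 0 < q.2}
  let e : ℝ × ℝ × ℝ ≃ᵐ (ℝ × ℝ) × ℝ := MeasurableEquiv.prodAssoc.symm
  have hS : {p : ℝ × ℝ × ℝ | 0 < p.1 ∧ 0 < p.2.1 ∧ 0 < p.2.2} = e ⁻¹' (T ×ˢ Ioi 0) := by
    ext p
    exact and_assoc.symm
  have he : MeasurePreserving e (volume.restrict {p | 0 < p.1 ∧ 0 < p.2.1 ∧ 0 < p.2.2})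
      ((volume.restrict T).prod (volume.restrict (Ioi 0))) := by
    rw [hS, Measure.prod_restrict, ← Measure.volume_eq_prod]
    exact volume_preserving_prodAssoc.symm.restrict_preimage_emb e.measurableEmbedding _
  rw [show (fun p : ℝ × ℝ × ℝ => (p.1, p.2.1)) = Prod.fst ∘ e from rfl,
    ← Measure.map_map measurable_fst e.measurable, μ, map_withDensity_of_measurePreserving e he,
    map_fst_withDensity_prod _ _ (by fun_prop)]
  refine withDensity_congr_ae ?_
  filter_upwards [ae_restrict_mem (by measurability : MeasurableSet T)] with q hq
  exact lintegral_Ioi_density_μ (add_pos hq.1 hq.2)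
end

section
/- The pushforward, under the map (u, s, t) ↦ (u·s, (1−u)·s, t), of the product of Lebesgue measure on (0,1) with the measure ν on (0,∞)² having density (s, t) ↦ (3^{−5/8}/(8√(2π))) · s^{3/2} · exp(−s²/(2√3·t)) · t^{−5/2}, equals the measure μ. -/
/-! `(u, s, t) ↦ (u s, (1 - u) s, t)` maps `(0,1) × (0,∞)²` bijectively onto `(0,∞)³`
with Jacobian `s`, and the density of `ν` at `(s, t)` is `s` times the density of `μ` at any
`(l, r, t)` with `l + r = s`; the change of variables formula does the rest. -/

open MeasureTheory

/-- The measure `ν` on `(0,∞)²` with density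
`(s,t) ↦ (3^{−5/8}/(8√(2π))) s^{3/2} exp(−s²/(2√3 t)) t^{−5/2}`. -/
noncomputable def ν : Measure (ℝ × ℝ) :=
  (volume.restrict {q : ℝ × ℝ | 0 < q.1 ∧ 0 < q.2}).withDensity
    fun q => ENNReal.ofReal
      ((3:ℝ) ^ (-(5:ℝ)/8) / (8 * Real.sqrt (2 * Real.pi)) * q.1 ^ ((3:ℝ)/2) *
        Real.exp (-q.1^2 / (2 * Real.sqrt 3 * q.2)) * q.2 ^ (-(5:ℝ)/2))

open Set
open scoped ENNReal

section ChangeOfVariables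

variable {α β : Type*} [MeasurableSpace α] [MeasurableSpace β]

theorem map_withDensity_comp (m : Measure α) {f : α → β} (hf : Measurable f)
    {g : β → ℝ≥0∞} (hg : Measurable g) :
    (m.withDensity (g ∘ f)).map f = (m.map f).withDensity g := by
  ext s hs
  rw [Measure.map_apply hf hs, withDensity_apply _ (hf hs), withDensity_apply _ hs,
    setLIntegral_map hs hg hf, Function.comp_def]

variable {E : Type*} [NormedAddCommGroup E] [NormedSpace ℝ E] [FiniteDimensional ℝ E]
  [MeasurableSpace E] [BorelSpace E] (m : Measure E) [m.IsAddHaarMeasure]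

theorem map_withDensity_abs_det_fderiv_mul_comp {s : Set E} {f : E → E} {f' : E → E →L[ℝ] E}
    (hs : MeasurableSet s) (hf : Measurable f) (hf' : ∀ x ∈ s, HasFDerivWithinAt f (f' x) s x)
    (hinj : InjOn f s) {g : E → ℝ≥0∞} (hg : Measurable g) :
    ((m.restrict s).withDensity fun x => ENNReal.ofReal |(f' x).det| * g (f x)).map f =
      (m.restrict (f '' s)).withDensity g := by
  have hdet : AEMeasurable (fun x => ENNReal.ofReal |(f' x).det|) (m.restrict s) :=
    ENNReal.measurable_ofReal.comp_aemeasurable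
      ((continuous_abs.comp ContinuousLinearMap.continuous_det).measurable.comp_aemeasurable
        (aemeasurable_fderivWithin m hs hf'))
  rw [show (fun x => ENNReal.ofReal |(f' x).det| * g (f x)) =
      (fun x => ENNReal.ofReal |(f' x).det|) * (g ∘ f) from rfl,
    withDensity_mul₀ hdet (hg.comp hf).aemeasurable, map_withDensity_comp _ hf hg,
    map_withDensity_abs_det_fderiv_eq_addHaar m hs.nullMeasurableSet hf' hinj]

end ChangeOfVariables

def splitMap (p : ℝ × ℝ × ℝ) : ℝ × ℝ × ℝ := (p.1 * p.2.1, (1 - p.1) * p.2.1, p.2.2)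

def splitDomain : Set (ℝ × ℝ × ℝ) := Ioo 0 1 ×ˢ (Ioi 0 ×ˢ Ioi 0)

noncomputable def splitMapDeriv (u s : ℝ) : (ℝ × ℝ × ℝ) →L[ℝ] ℝ × ℝ × ℝ :=
  let a := ContinuousLinearMap.fst ℝ ℝ (ℝ × ℝ)
  let b := (ContinuousLinearMap.fst ℝ ℝ ℝ).comp (ContinuousLinearMap.snd ℝ ℝ (ℝ × ℝ))
  let c := (ContinuousLinearMap.snd ℝ ℝ ℝ).comp (ContinuousLinearMap.snd ℝ ℝ (ℝ × ℝ))
  (u • b + s • a).prod (((1 - u) • b + s • -a).prod c)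

theorem measurable_splitMap : Measurable splitMap := by
  unfold splitMap; fun_prop

theorem measurableSet_splitDomain : MeasurableSet splitDomain :=
  measurableSet_Ioo.prod (measurableSet_Ioi.prod measurableSet_Ioi)

theorem hasFDerivAt_splitMap (p : ℝ × ℝ × ℝ) :
    HasFDerivAt splitMap (splitMapDeriv p.1 p.2.1) p := by
  have ha := (ContinuousLinearMap.fst ℝ ℝ (ℝ × ℝ)).hasFDerivAt (x := p)
  have hb := ((ContinuousLinearMap.fst ℝ ℝ ℝ).comp
    (ContinuousLinearMap.snd ℝ ℝ (ℝ × ℝ))).hasFDerivAt (x := p)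
  have hc := ((ContinuousLinearMap.snd ℝ ℝ ℝ).comp
    (ContinuousLinearMap.snd ℝ ℝ (ℝ × ℝ))).hasFDerivAt (x := p)
  exact (ha.mul hb).prodMk (((ha.const_sub 1).mul hb).prodMk hc)

@[simps]
noncomputable def prodFinThreeEquiv : (ℝ × ℝ × ℝ) ≃ₗ[ℝ] (Fin 3 → ℝ) where
  toFun p := ![p.1, p.2.1, p.2.2]
  invFun f := (f 0, f 1, f 2)
  map_add' p q := by funext i; fin_cases i <;> simp
  map_smul' c p := by funext i; fin_cases i <;> simp
  left_inv p := rfl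
  right_inv f := by funext i; fin_cases i <;> simp

theorem det_splitMapDeriv (u s : ℝ) : (splitMapDeriv u s).det = s := by
  rw [ContinuousLinearMap.det,
    ← LinearMap.det_toMatrix (Module.Basis.ofEquivFun prodFinThreeEquiv), Matrix.det_fin_three]
  simp [LinearMap.toMatrix_apply, splitMapDeriv]
  ring

theorem injOn_splitMap : InjOn splitMap splitDomain := by
  rintro ⟨u, s, t⟩ ⟨-, hs, -⟩ ⟨u', s', t'⟩ - h
  simp only [splitMap, Prod.mk.injEq] at h
  obtain ⟨hl, hr, rfl⟩ := h
  have hss' : s = s' := by linarith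
  subst hss'
  simp [mul_right_cancel₀ (ne_of_gt hs) hl]

theorem image_splitMap_splitDomain :
    splitMap '' splitDomain = {p : ℝ × ℝ × ℝ | 0 < p.1 ∧ 0 < p.2.1 ∧ 0 < p.2.2} := by
  ext ⟨l, r, t⟩
  simp only [splitMap, splitDomain, mem_image, mem_prod, mem_Ioo, mem_Ioi, mem_ofPred_eq,
    Prod.mk.injEq, Prod.exists]
  constructor
  · rintro ⟨u, s, t', ⟨⟨hu0, hu1⟩, hs, ht⟩, rfl, rfl, rfl⟩
    exact ⟨mul_pos hu0 hs, mul_pos (by linarith) hs, ht⟩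
  · rintro ⟨hl, hr, ht⟩
    have hlr : 0 < l + r := by linarith
    refine ⟨l / (l + r), l + r, t, ⟨⟨div_pos hl hlr, (div_lt_one hlr).2 (by linarith)⟩,
      hlr, ht⟩, by field_simp, by field_simp; ring, rfl⟩

noncomputable def excursionDensity (a x t : ℝ) : ℝ :=
  (3:ℝ) ^ (-(5:ℝ)/8) / (8 * Real.sqrt (2 * Real.pi)) * x ^ a *
    Real.exp (-x^2 / (2 * Real.sqrt 3 * t)) * t ^ (-(5:ℝ)/2)

theorem excursionDensity_add_one (a t : ℝ) {x : ℝ} (hx : 0 < x) :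
    excursionDensity (a + 1) x t = x * excursionDensity a x t := by
  rw [excursionDensity, excursionDensity, Real.rpow_add_one hx.ne']
  ring

theorem ν_eq_withDensity_excursionDensity :
    ν = (volume.restrict (Ioi (0:ℝ) ×ˢ Ioi 0)).withDensity
      fun q => ENNReal.ofReal (excursionDensity (3/2) q.1 q.2) := rfl

noncomputable def μDensity (p : ℝ × ℝ × ℝ) : ℝ≥0∞ :=
  ENNReal.ofReal (excursionDensity (1/2) (p.1 + p.2.1) p.2.2)

theorem measurable_μDensity : Measurable μDensity := by
  unfold μDensity excursionDensity; fun_prop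

theorem volume_Ioo_prod_ν :
    (volume.restrict (Ioo (0:ℝ) 1)).prod ν = (volume.restrict splitDomain).withDensity
      fun p => ENNReal.ofReal |(splitMapDeriv p.1 p.2.1).det| * μDensity (splitMap p) := by
  rw [ν_eq_withDensity_excursionDensity,
    prod_withDensity_right (by unfold excursionDensity; fun_prop),
    Measure.prod_restrict, ← Measure.volume_eq_prod]
  refine withDensity_congr_ae (ae_restrict_of_forall_mem measurableSet_splitDomain ?_)
  rintro ⟨u, s, t⟩ ⟨-, hs, -⟩
  simp only [μDensity, splitMap, det_splitMapDeriv]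
  rw [abs_of_pos hs, ← ENNReal.ofReal_mul hs.le,
    show u * s + (1 - u) * s = s by ring, ← excursionDensity_add_one _ _ hs]
  norm_num

/-- Product decomposition of `μ`: under the cone excursion measure for
`θ = 2π/3`, conditionally on `‖e(0)‖₁`, the angular part of the start point
is uniform and independent of the duration. -/
theorem stmt_14 :
    Measure.map (fun p : ℝ × ℝ × ℝ => (p.1 * p.2.1, (1 - p.1) * p.2.1, p.2.2))
      ((volume.restrict (Set.Ioo (0:ℝ) 1)).prod ν) = μ := by
  -- instance search does not see `volume` on a product as `volume.prod volume`
  have : (volume : Measure (ℝ × ℝ)).IsAddHaarMeasure := Measure.prod.instIsAddHaarMeasure _ _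
  have : (volume : Measure (ℝ × ℝ × ℝ)).IsAddHaarMeasure := Measure.prod.instIsAddHaarMeasure _ _
  rw [volume_Ioo_prod_ν]
  refine (map_withDensity_abs_det_fderiv_mul_comp volume measurableSet_splitDomain
    measurable_splitMap (fun p _ => (hasFDerivAt_splitMap p).hasFDerivWithinAt) injOn_splitMap
    measurable_μDensity).trans ?_
  rw [image_splitMap_splitDomain]
  rfl
end
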